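/- arXiv:math/0108112 — 2 statements merged into one kernel-verified Lean document; each statement's English description precedes it below -/
import Mathlib

section
/- Assume q + q⁻¹ ≠ 0 in K. The matrices P⁺_q = (q+q⁻¹)⁻¹·(q·I_{n²} − S) and P⁻_q = (q+q⁻¹)⁻¹·(q⁻¹·I_{n²} + S) are two orthogonal idempotents summing to the identity: (P⁺_q)² = P⁺_q, (P⁻_q)² = P⁻_q, P⁺_q·P⁻_q = P⁻_q·P⁺_q = 0, and P⁺_q + P⁻_q = I_{n²}. -/
/-!
The Hecke matrix satisfies the quadratic relation `S² = (q − q⁻¹) S + 1`, i.e.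
`(S − q)(S + q⁻¹) = 0`: on basis vectors, `S (e_c ⊗ e_c) = q e_c ⊗ e_c`, and for `c ≠ d`,
`S (e_c ⊗ e_d) = e_d ⊗ e_c`, plus `(q − q⁻¹) e_c ⊗ e_d` when `c < d`. In any algebra, an element
annihilated by `(X − q)(X + q⁻¹)` with distinct roots `q ≠ −q⁻¹` splits `1` into the two Lagrange
interpolation idempotents `(q − S)/(q + q⁻¹)` and `(q⁻¹ + S)/(q + q⁻¹)`; their product is a
multiple of `(S − q)(S + q⁻¹)`.
-/

open Matrix Kronecker

/-- The Hecke matrix `S = q·Σᵢ E_{ii}⊗E_{ii} + Σ_{i≠j} E_{ij}⊗E_{ji} + (q−q⁻¹)·Σ_{i<j} E_{ii}⊗E_{jj}`. -/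
noncomputable def heckeS (K : Type*) [Field K] (n : ℕ) (q : K) :
    Matrix (Fin n × Fin n) (Fin n × Fin n) K :=
  q • (∑ i : Fin n, single i i (1 : K) ⊗ₖ single i i (1 : K))
    + ∑ i : Fin n, ∑ j : Fin n,
        (if i ≠ j then single i j (1 : K) ⊗ₖ single j i (1 : K) else 0)
    + (q - q⁻¹) • ∑ i : Fin n, ∑ j : Fin n,
        (if i < j then single i i (1 : K) ⊗ₖ single j j (1 : K) else 0)

/-- `P⁺_q = (q+q⁻¹)⁻¹·(q·I − S)`. -/
noncomputable def Pplus (K : Type*) [Field K] (n : ℕ) (q : K) :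
    Matrix (Fin n × Fin n) (Fin n × Fin n) K :=
  (q + q⁻¹)⁻¹ • (q • (1 : Matrix (Fin n × Fin n) (Fin n × Fin n) K) - heckeS K n q)

/-- `P⁻_q = (q+q⁻¹)⁻¹·(q⁻¹·I + S)`. -/
noncomputable def Pminus (K : Type*) [Field K] (n : ℕ) (q : K) :
    Matrix (Fin n × Fin n) (Fin n × Fin n) K :=
  (q + q⁻¹)⁻¹ • (q⁻¹ • (1 : Matrix (Fin n × Fin n) (Fin n × Fin n) K) + heckeS K n q)

theorem ne_zero_of_add_inv_ne_zero {K : Type*} [DivisionRing K] {q : K} (h : q + q⁻¹ ≠ 0) :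
    q ≠ 0 := by
  rintro rfl
  simp at h

section HeckeRelation

variable {K A : Type*} [Field K] [Ring A] [Algebra K A] {q : K} {s : A}

theorem completeOrthogonalIdempotents_of_hecke_relation (hs : s * s = (q - q⁻¹) • s + 1)
    (h2q : q + q⁻¹ ≠ 0) :
    CompleteOrthogonalIdempotents
      ![(q + q⁻¹)⁻¹ • (q • 1 - s), (q + q⁻¹)⁻¹ • (q⁻¹ • 1 + s)] := by
  have hq := ne_zero_of_add_inv_ne_zero h2q
  have hfactor : (q • 1 - s) * (q⁻¹ • 1 + s) = 0 := by
    simp only [sub_mul, mul_add, smul_mul_assoc, mul_smul_comm, one_mul, mul_one, hs]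
    match_scalars <;> field_simp <;> ring
  have hfactor' : (q⁻¹ • 1 + s) * (q • 1 - s) = 0 := by
    simp only [add_mul, mul_sub, smul_mul_assoc, mul_smul_comm, one_mul, mul_one, hs]
    match_scalars <;> field_simp <;> ring
  rw [CompleteOrthogonalIdempotents.pair_iff'ₛ, smul_mul_smul_comm, smul_mul_smul_comm, hfactor,
    hfactor']
  refine ⟨smul_zero _, smul_zero _, ?_⟩
  rw [← smul_add, sub_add_add_cancel, ← add_smul, smul_smul, inv_mul_cancel₀ h2q, one_smul]

end HeckeRelation

section HeckeMatrix

variable {K : Type*} [Field K] {n : ℕ}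

theorem heckeS_apply (q : K) (x : Fin n × Fin n) (c d : Fin n) :
    heckeS K n q x (c, d) =
      (if x = (d, c) then (if c = d then q else 1) else 0)
        + (if x = (c, d) ∧ c < d then q - q⁻¹ else 0) := by
  obtain ⟨a, b⟩ := x
  have ite_single (P : Prop) [Decidable P] (p p' : Fin n × Fin n) :
      (if P then single p p' (1 : K) else 0) = single p p' (if P then 1 else 0) := by
    split_ifs <;> simp
  simp only [heckeS, single_kronecker_single, ite_single, Matrix.add_apply, Matrix.smul_apply,
    Matrix.sum_apply, single_apply, Prod.mk.injEq, mul_one, smul_eq_mul, ite_and,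
    Finset.sum_ite_eq', Finset.sum_ite_irrel, Finset.sum_const_zero, Finset.mem_univ, if_true]
  congr 1
  · by_cases h : a = d ∧ b = c
    · obtain ⟨rfl, rfl⟩ := h
      by_cases hab : a = b <;> simp [hab, eq_comm]
    · aesop
  · by_cases h : a = c ∧ b = d
    · obtain ⟨rfl, rfl⟩ := h
      simp
    · aesop

theorem heckeS_mul_self {q : K} (hq : q ≠ 0) :
    heckeS K n q * heckeS K n q = (q - q⁻¹) • heckeS K n q + 1 := by
  ext x ⟨c, d⟩
  simp only [mul_apply, heckeS_apply, mul_add, mul_ite, mul_zero, ite_and, Finset.sum_add_distrib,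
    Finset.sum_ite_eq', Finset.mem_univ, if_true, Matrix.add_apply, Matrix.smul_apply, smul_eq_mul,
    one_apply]
  rcases lt_trichotomy c d with h | rfl | h
  · have hx : (c, d) ≠ (d, c) := by simp [h.ne]
    by_cases h1 : x = (c, d)
    · simp [h1, h, h.ne, h.ne', hx]
      ring
    by_cases h2 : x = (d, c) <;> simp [h1, h2, h, h.ne, h.ne', h.not_gt]
  · by_cases h1 : x = (c, c) <;> simp [h1]
    field_simp
    ring
  · have hx : (c, d) ≠ (d, c) := by simp [h.ne']
    by_cases h1 : x = (c, d)
    · simp [h1, h.ne, h.ne', h.not_gt, hx]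
    by_cases h2 : x = (d, c) <;> simp [h1, h2, h, h.ne, h.ne', h.not_gt]

end HeckeMatrix

theorem Pq_orthogonal_idempotents_general (K : Type*) [Field K] (n : ℕ)
    (q : K) (h2q : q + q⁻¹ ≠ 0) :
    Pplus K n q * Pplus K n q = Pplus K n q ∧
    Pminus K n q * Pminus K n q = Pminus K n q ∧
    Pplus K n q * Pminus K n q = 0 ∧
    Pminus K n q * Pplus K n q = 0 ∧
    Pplus K n q + Pminus K n q = 1 := by
  have h := completeOrthogonalIdempotents_of_hecke_relation
    (heckeS_mul_self (n := n) (ne_zero_of_add_inv_ne_zero h2q)) h2q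
  exact ⟨h.idem 0, h.idem 1, h.ortho zero_ne_one, h.ortho one_ne_zero,
    (Fin.sum_univ_two _).symm.trans h.complete⟩

/-- `P⁺_q` and `P⁻_q` are orthogonal idempotents summing to the identity. -/
theorem Pq_orthogonal_idempotents (K : Type*) [Field K] (n : ℕ) (hn : 1 ≤ n)
    (q : K) (hq : q ≠ 0) (h2q : q + q⁻¹ ≠ 0) :
    Pplus K n q * Pplus K n q = Pplus K n q ∧
    Pminus K n q * Pminus K n q = Pminus K n q ∧
    Pplus K n q * Pminus K n q = 0 ∧
    Pminus K n q * Pplus K n q = 0 ∧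
    Pplus K n q + Pminus K n q = 1 :=
  Pq_orthogonal_idempotents_general K n q h2q
end

section
/- For n = 4, the skew-identity matrix A^{2,2} = Σ_{i=1}^{4} E_{i, 5−i} ∈ M₄(K) satisfies the numeric reflection equation, obeys (A^{2,2})² = I₄, and is q-traceless: Tr_q(A^{2,2}) = 0. -/
/-!
Call a matrix a Hecke matrix for an injective map `σ` on the index set and a selector `χ` if it
sends `e v` to `q • e v` when `σ v = v`, and to `e (σ v) + ω [χ v] • e v` otherwise. The Hecke
matrix `S` is the one for `σ (c, d) = (d, c)` and `χ (c, d) = (c < d)`, and conjugating it by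
`A₂ = 1 ⊗ J`, with `J` the reversal permutation matrix `c ↦ c' = n - 1 - c`, gives the Hecke
matrix for `ρ (c, d) = (d', c')` and `c < d'`. Two Hecke matrices commute as soon as their maps
commute and each selector is invariant under the other map; here this is `c < d ↔ d' < c'` and
`c < d' ↔ d < c'`. So `A₂ S A₂` commutes with `S`, which is the reflection equation, for every
`n`; `A^{2,2}` is `J` for `n = 4`.
-/

open Matrix Kronecker

/-- The skew-identity matrix `A^{2,2} = Σ_{i=1}^{4} E_{i,5−i} ∈ M₄(K)`. -/
def A22 (K : Type*) [Field K] : Matrix (Fin 4) (Fin 4) K :=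
  !![0, 0, 0, 1; 0, 0, 1, 0; 0, 1, 0, 0; 1, 0, 0, 0]

/-- The quantum-trace matrix `D = diag(1, q⁻², q⁻⁴, q⁻⁶)` for `n = 4`. -/
noncomputable def qTraceD4 (K : Type*) [Field K] (q : K) : Matrix (Fin 4) (Fin 4) K :=
  Matrix.diagonal ![1, q ^ (-2 : ℤ), q ^ (-4 : ℤ), q ^ (-6 : ℤ)]

open Function

section HeckeMatrix

variable {V R : Type*} [Fintype V] [DecidableEq V] [CommRing R]

def heckeColumn (σ : V → V) (χ : V → Prop) [DecidablePred χ] (q ω : R) (v : V) : V → R :=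
  if σ v = v then q • Pi.single v 1
  else Pi.single (σ v) 1 + (if χ v then ω else 0) • Pi.single v 1

def heckeMatrix (σ : V → V) (χ : V → Prop) [DecidablePred χ] (q ω : R) : Matrix V V R :=
  of fun u v => heckeColumn σ χ q ω v u

theorem heckeMatrix_mulVec_single (σ : V → V) (χ : V → Prop) [DecidablePred χ] (q ω : R)
    (v : V) : heckeMatrix σ χ q ω *ᵥ Pi.single v 1 = heckeColumn σ χ q ω v := by
  rw [mulVec_single_one]
  rfl

theorem heckeMatrix_commute {σ ρ : V → V} (hσ : Injective σ) (hρ : Injective ρ)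
    (hσρ : ∀ v, σ (ρ v) = ρ (σ v)) {χ ψ : V → Prop} [DecidablePred χ] [DecidablePred ψ]
    (hχ : ∀ v, χ (ρ v) ↔ χ v) (hψ : ∀ v, ψ (σ v) ↔ ψ v) (q ω q' ω' : R) :
    Commute (heckeMatrix σ χ q ω) (heckeMatrix ρ ψ q' ω') := by
  refine ext_of_mulVec_single fun v => ?_
  simp only [← mulVec_mulVec, heckeMatrix_mulVec_single]
  have hρσ_ρ : ρ (σ v) = ρ v ↔ σ v = v := hρ.eq_iff
  have hρσ_σ : ρ (σ v) = σ v ↔ ρ v = v := by rw [← hσρ, hσ.eq_iff]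
  by_cases hσv : σ v = v <;> by_cases hρv : ρ v = v <;>
    simp only [heckeColumn, hσv, hρv, hρσ_ρ, hρσ_σ, hσρ, hχ, hψ, if_true, if_false, mulVec_add,
      mulVec_smul, heckeMatrix_mulVec_single] <;>
    module

theorem permMatrix_mul_heckeMatrix_mul_permMatrix_inv (τ : Equiv.Perm V) (σ : V → V)
    (χ : V → Prop) [DecidablePred χ] (q ω : R) :
    τ.permMatrix R * heckeMatrix σ χ q ω * τ⁻¹.permMatrix R
      = heckeMatrix (τ.symm ∘ σ ∘ τ) (fun v => χ (τ v)) q ω := by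
  refine ext_of_mulVec_single fun v => ?_
  simp only [← mulVec_mulVec, permMatrix_mulVec, Pi.single_comp_equiv, heckeMatrix_mulVec_single,
    Equiv.Perm.inv_def, Equiv.symm_symm]
  have hfix : τ.symm (σ (τ v)) = v ↔ σ (τ v) = τ v := Equiv.symm_apply_eq τ
  by_cases h : σ (τ v) = τ v <;>
    simp only [heckeColumn, Function.comp_apply, h, hfix, if_true, if_false, Pi.add_comp,
      Pi.smul_comp, Pi.single_comp_equiv, Equiv.symm_apply_apply]

end HeckeMatrix

theorem permMatrix_kronecker_permMatrix {m p R : Type*} [DecidableEq m] [DecidableEq p]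
    [MulZeroOneClass R] (σ : Equiv.Perm m) (τ : Equiv.Perm p) :
    σ.permMatrix R ⊗ₖ τ.permMatrix R = Equiv.Perm.permMatrix R (σ.prodCongr τ) := by
  ext ⟨a, b⟩ ⟨c, d⟩
  simp only [kroneckerMap_apply, PEquiv.toMatrix_apply, Equiv.toPEquiv_apply, Option.mem_some_iff,
    Equiv.prodCongr_apply, Prod.map, Prod.mk.injEq, ite_zero_mul_ite_zero, ite_and, mul_one]

section HeckeS

variable {K : Type*} [Field K] {n : ℕ}

theorem heckeS_mulVec_single (q : K) (c d : Fin n) :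
    heckeS K n q *ᵥ Pi.single (c, d) 1
      = heckeColumn Prod.swap (fun p : Fin n × Fin n => p.1 < p.2) q (q - q⁻¹) (c, d) := by
  -- writing `if P then M else 0` as `[P] • M` lets the deltas of `Pi.single` be summed out
  simp only [heckeS, ← boole_smul (M₀ := K) (A := Matrix (Fin n × Fin n) (Fin n × Fin n) K)]
  simp only [add_mulVec, smul_mulVec, sum_mulVec, single_kronecker_single, single_mulVec_eq,
    smul_smul, Pi.single_apply, Prod.mk.injEq]
  simp only [ite_and, mul_ite, mul_one, mul_zero, ite_smul, zero_smul, Finset.sum_ite_irrel,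
    Finset.sum_const_zero, Finset.sum_ite_eq', Finset.mem_univ, if_true]
  by_cases h : c = d
  · subst h
    simp [heckeColumn]
  · simp [heckeColumn, h, Ne.symm h]

theorem heckeS_eq_heckeMatrix (q : K) :
    heckeS K n q = heckeMatrix Prod.swap (fun p : Fin n × Fin n => p.1 < p.2) q (q - q⁻¹) :=
  ext_of_mulVec_single fun ⟨c, d⟩ => by
    rw [heckeS_mulVec_single, heckeMatrix_mulVec_single]

theorem revPerm_reflection_equation (q : K) :
    (1 ⊗ₖ Fin.revPerm.permMatrix K) * heckeS K n q * (1 ⊗ₖ Fin.revPerm.permMatrix K)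
        * heckeS K n q
      = heckeS K n q * (1 ⊗ₖ Fin.revPerm.permMatrix K) * heckeS K n q
        * (1 ⊗ₖ Fin.revPerm.permMatrix K) := by
  set τ : Equiv.Perm (Fin n × Fin n) := (Equiv.refl _).prodCongr Fin.revPerm
  have hP : (1 : Matrix (Fin n) (Fin n) K) ⊗ₖ Fin.revPerm.permMatrix K = τ.permMatrix K := by
    rw [← permMatrix_kronecker_permMatrix, permMatrix_refl (R := K)]
  have hτ : τ⁻¹ = τ := by
    ext p <;> simp [τ, Equiv.Perm.inv_def, Fin.revPerm_symm]
  have hconj : τ.permMatrix K * heckeS K n q * τ.permMatrix K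
      = heckeMatrix (τ.symm ∘ Prod.swap ∘ τ) (fun p => (τ p).1 < (τ p).2) q (q - q⁻¹) := by
    have h := permMatrix_mul_heckeMatrix_mul_permMatrix_inv τ Prod.swap
      (fun p : Fin n × Fin n => p.1 < p.2) q (q - q⁻¹)
    rwa [hτ, ← heckeS_eq_heckeMatrix] at h
  have hcomm := heckeMatrix_commute (χ := fun p : Fin n × Fin n => p.1 < p.2)
      (ψ := fun p => (τ p).1 < (τ p).2) Prod.swap_injective
      (τ.symm.injective.comp (Prod.swap_injective.comp τ.injective))
      (fun ⟨c, d⟩ => by simp [τ, Fin.revPerm_symm]) (fun ⟨c, d⟩ => by simp [τ, Fin.revPerm_symm])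
      (fun ⟨c, d⟩ => by simp [τ, Fin.lt_rev_iff]) q (q - q⁻¹) q (q - q⁻¹)
  rw [← hconj, ← heckeS_eq_heckeMatrix] at hcomm
  rw [hP]
  simpa only [mul_assoc] using hcomm.eq.symm

theorem A22_eq_permMatrix_revPerm : A22 K = Fin.revPerm.permMatrix K := by
  ext i j
  fin_cases i <;> fin_cases j <;> simp [A22, PEquiv.toMatrix_apply]

end HeckeS

theorem A22_reflection_general (K : Type*) [Field K] (q : K) :
    ((1 : Matrix (Fin 4) (Fin 4) K) ⊗ₖ A22 K) * heckeS K 4 q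
        * ((1 : Matrix (Fin 4) (Fin 4) K) ⊗ₖ A22 K) * heckeS K 4 q
      = heckeS K 4 q * ((1 : Matrix (Fin 4) (Fin 4) K) ⊗ₖ A22 K)
        * heckeS K 4 q * ((1 : Matrix (Fin 4) (Fin 4) K) ⊗ₖ A22 K) ∧
    A22 K * A22 K = 1 ∧
    Matrix.trace (qTraceD4 K q * A22 K) = 0 := by
  refine ⟨?_, ?_, ?_⟩
  · rw [A22_eq_permMatrix_revPerm]
    exact revPerm_reflection_equation q
  · rw [A22_eq_permMatrix_revPerm, ← permMatrix_mul,
      show Fin.revPerm * Fin.revPerm = (1 : Equiv.Perm (Fin 4)) from Equiv.ext Fin.rev_rev,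
      permMatrix_one]
  · simp [trace, qTraceD4, A22, Fin.sum_univ_four]

/-- `A^{2,2}` satisfies the numeric reflection equation, squares to the identity,
and is q-traceless. -/
theorem A22_reflection (K : Type*) [Field K] (q : K) (hq : q ≠ 0) :
    ((1 : Matrix (Fin 4) (Fin 4) K) ⊗ₖ A22 K) * heckeS K 4 q
        * ((1 : Matrix (Fin 4) (Fin 4) K) ⊗ₖ A22 K) * heckeS K 4 q
      = heckeS K 4 q * ((1 : Matrix (Fin 4) (Fin 4) K) ⊗ₖ A22 K)
        * heckeS K 4 q * ((1 : Matrix (Fin 4) (Fin 4) K) ⊗ₖ A22 K) ∧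
    A22 K * A22 K = 1 ∧
    Matrix.trace (qTraceD4 K q * A22 K) = 0 :=
  A22_reflection_general K q
end
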